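/- arXiv:2102.00146 — 2 statements merged into one kernel-verified Lean document; each statement's English description precedes it below -/
import Mathlib

section
/- Let Q(1),…,Q(d) be r×r real matrices and Σ an r×r real diagonal matrix with Frobenius norm ‖Σ‖_F = 1 satisfying the canonical orthogonality conditions ∑_{i=1}^d Q(i)^T Σ² Q(i) = I and ∑_{i=1}^d Q(i) Σ² Q(i)^T = I. Let T_{Q_R} := ∑_{i=1}^d (Q(i)Σ) ⊗ (Q(i)Σ), and assume T_{Q_R} is diagonalizable, that 1 is a simple eigenvalue of T_{Q_R}, and that every other eigenvalue of T_{Q_R} has modulus strictly less than 1. Then for every r²×r² real matrix M̃, trace(T_{Q_R}^k M̃ T_{Q_R}^k) converges, as k → ∞, to vec(Σ²)^T M̃ vec(I). -/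
open Matrix Filter
open scoped Kronecker

/-!
Writing `T = W diag(λ) V` with `V W = 1`, the powers `T ^ k` converge to the spectral projector
`P = W diag(e_{i₀}) V`, which has rank one. The canonical conditions say that `vec I` and
`vec Σ²` are right and left fixed vectors of `T`, and `‖Σ‖_F = 1` that `vec(Σ²)ᵀ vec I = 1`.
Since `P` fixes both vectors as well, it equals `vec I vec(Σ²)ᵀ`, so
`tr (T ^ k M T ^ k) → tr (P M P) = vec(Σ²)ᵀ M vec I`.
-/

/-- Column-major vectorization of a square matrix, indexed by pairs, chosen so that
`vec (A * B * C) = (Cᵀ ⊗ₖ A) *ᵥ vec B` holds for Mathlib's Kronecker product. -/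
def vec {r : ℕ} (M : Matrix (Fin r) (Fin r) ℝ) : Fin r × Fin r → ℝ :=
  fun p => M p.2 p.1

open Topology

theorem vec_eq_matrix_vec {r : ℕ} (M : Matrix (Fin r) (Fin r) ℝ) : _root_.vec M = M.vec := rfl

namespace Matrix

section Transfer

variable {ι m R : Type*} [Fintype ι] [Fintype m] [CommSemiring R]

theorem sum_kronecker_self_mulVec_vec (A : ι → Matrix m m R) (X : Matrix m m R) :
    (∑ i, A i ⊗ₖ A i) *ᵥ X.vec = (∑ i, A i * X * (A i)ᵀ).vec := by
  simp_rw [sum_mulVec, kronecker_mulVec_vec, vec_sum]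

theorem vec_vecMul_sum_kronecker_self (A : ι → Matrix m m R) (X : Matrix m m R) :
    X.vec ᵥ* (∑ i, A i ⊗ₖ A i) = (∑ i, (A i)ᵀ * X * A i).vec := by
  simp_rw [vecMul_sum, vec_vecMul_kronecker, vec_sum]

variable [DecidableEq m] {Q : ι → Matrix m m R} {S : Matrix m m R}

theorem sum_kronecker_mul_self_mulVec_vec_one (hS : Sᵀ = S)
    (hQ : ∑ i, Q i * S ^ 2 * (Q i)ᵀ = 1) :
    (∑ i, (Q i * S) ⊗ₖ (Q i * S)) *ᵥ (1 : Matrix m m R).vec = (1 : Matrix m m R).vec := by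
  conv_rhs => rw [← hQ]
  simp_rw [sum_kronecker_self_mulVec_vec, Matrix.mul_one, transpose_mul, hS, sq, Matrix.mul_assoc]

theorem vec_sq_vecMul_sum_kronecker_mul_self (hS : Sᵀ = S)
    (hQ : ∑ i, (Q i)ᵀ * S ^ 2 * Q i = 1) :
    (S ^ 2).vec ᵥ* (∑ i, (Q i * S) ⊗ₖ (Q i * S)) = (S ^ 2).vec := by
  have : ∑ i, (Q i * S)ᵀ * S ^ 2 * (Q i * S) = S * (∑ i, (Q i)ᵀ * S ^ 2 * Q i) * S := by
    simp_rw [Finset.mul_sum, Finset.sum_mul, transpose_mul, hS, Matrix.mul_assoc]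
  rw [vec_vecMul_sum_kronecker_self, this, hQ, Matrix.mul_one, sq]

theorem vec_sq_dotProduct_vec_one (hS : Sᵀ = S) :
    (S ^ 2).vec ⬝ᵥ (1 : Matrix m m R).vec = ∑ i, ∑ j, S i j ^ 2 := by
  calc (S ^ 2).vec ⬝ᵥ (1 : Matrix m m R).vec = (Sᵀ * S).trace := by
        rw [vec_dotProduct_vec, Matrix.mul_one, trace_transpose, sq, hS]
    _ = S.vec ⬝ᵥ S.vec := (vec_dotProduct_vec S S).symm
    _ = ∑ i, ∑ j, S i j ^ 2 := by
        simp only [dotProduct, vec, Fintype.sum_prod_type_right, sq]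

end Transfer

section Spectral

variable {n R 𝕜 : Type*} [Fintype n]

section Algebra

variable [CommRing R]

theorem pow_eq_mul_diagonal_pow_mul [DecidableEq n] {T W V : Matrix n n R} {lam : n → R}
    (hT : T = W * diagonal lam * V) (hVW : V * W = 1) (k : ℕ) :
    T ^ k = W * diagonal (lam ^ k) * V := by
  have hWV : W * V = 1 := mul_eq_one_comm.mp hVW
  have hsemi : SemiconjBy W (diagonal lam) T := by
    rw [SemiconjBy, hT, Matrix.mul_assoc _ V, hVW, Matrix.mul_one]
  calc T ^ k = T ^ k * W * V := by rw [Matrix.mul_assoc, hWV, Matrix.mul_one]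
    _ = W * diagonal (lam ^ k) * V := by rw [← (hsemi.pow_right k).eq, diagonal_pow]

theorem mul_diagonal_single_one_mul [DecidableEq n] (W V : Matrix n n R) (i₀ : n) :
    W * diagonal (Pi.single i₀ 1) * V = vecMulVec (fun i => W i i₀) (V i₀) := by
  ext i j
  simp [mul_apply, diagonal_apply, Pi.single_apply, vecMulVec_apply]

theorem vecMulVec_eq_of_mulVec_eq_of_vecMul_eq {x y v w : n → R}
    (hv : vecMulVec x y *ᵥ v = v) (hw : w ᵥ* vecMulVec x y = w) (hwv : w ⬝ᵥ v = 1) :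
    vecMulVec x y = vecMulVec v w := by
  rw [vecMulVec_mulVec, op_smul_eq_smul] at hv
  rw [vecMul_vecMulVec] at hw
  have hc : (y ⬝ᵥ v) * (w ⬝ᵥ x) = 1 := by
    calc (y ⬝ᵥ v) * (w ⬝ᵥ x) = w ⬝ᵥ (y ⬝ᵥ v) • x := by rw [dotProduct_smul, smul_eq_mul]
      _ = 1 := by rw [hv, hwv]
  calc vecMulVec x y = vecMulVec ((y ⬝ᵥ v) • x) ((w ⬝ᵥ x) • y) := by
        rw [smul_vecMulVec, vecMulVec_smul, smul_smul, hc, one_smul]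
    _ = vecMulVec v w := by rw [hv, hw]

theorem trace_vecMulVec_mul_mul_vecMulVec (v w : n → R) (M : Matrix n n R) :
    (vecMulVec v w * M * vecMulVec v w).trace = (w ⬝ᵥ M *ᵥ v) * (w ⬝ᵥ v) := by
  rw [vecMulVec_mul, vecMulVec_mul_vecMulVec, trace_vecMulVec, dotProduct_smul, smul_eq_mul,
    dotProduct_comm v w, dotProduct_mulVec]

end Algebra

section Analysis

variable [DecidableEq n] [NormedField 𝕜] {T W V : Matrix n n 𝕜} {lam : n → 𝕜} {i₀ : n}

theorem tendsto_pow_of_eq_mul_diagonal_mul (hT : T = W * diagonal lam * V) (hVW : V * W = 1)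
    (h1 : lam i₀ = 1) (hdom : ∀ i, i ≠ i₀ → ‖lam i‖ < 1) :
    Tendsto (T ^ ·) atTop (𝓝 (W * diagonal (Pi.single i₀ 1) * V)) := by
  have hlim : Tendsto (lam ^ ·) atTop (𝓝 (Pi.single i₀ 1 : n → 𝕜)) := by
    refine tendsto_pi_nhds.2 fun i => ?_
    obtain rfl | hi := eq_or_ne i i₀
    · simp [h1]
    · simpa [Pi.single_eq_of_ne hi] using tendsto_pow_atTop_nhds_zero_of_norm_lt_one (hdom i hi)
  simp_rw [pow_eq_mul_diagonal_pow_mul hT hVW]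
  exact ((continuous_const.matrix_mul continuous_id.matrix_diagonal).matrix_mul
    continuous_const).tendsto _ |>.comp hlim

theorem tendsto_trace_pow_mul_mul_pow (hT : T = W * diagonal lam * V) (hVW : V * W = 1)
    (h1 : lam i₀ = 1) (hdom : ∀ i, i ≠ i₀ → ‖lam i‖ < 1) {v w : n → 𝕜} (hv : T *ᵥ v = v)
    (hw : w ᵥ* T = w) (hwv : w ⬝ᵥ v = 1) (M : Matrix n n 𝕜) :
    Tendsto (fun k => (T ^ k * M * T ^ k).trace) atTop (𝓝 (w ⬝ᵥ M *ᵥ v)) := by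
  set P := W * diagonal (Pi.single i₀ 1) * V with hP_def
  have hP : Tendsto (T ^ ·) atTop (𝓝 P) := tendsto_pow_of_eq_mul_diagonal_mul hT hVW h1 hdom
  have hPv : P *ᵥ v = v := by
    have hTk (k : ℕ) : T ^ k *ᵥ v = v := by
      induction k with
      | zero => rw [pow_zero, one_mulVec]
      | succ k ih => rw [pow_succ', ← mulVec_mulVec, ih, hv]
    exact tendsto_nhds_unique
      ((continuous_id.matrix_mulVec continuous_const).tendsto P |>.comp hP)
      (tendsto_const_nhds.congr fun k => (hTk k).symm)
  have hwP : w ᵥ* P = w := by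
    have hTk (k : ℕ) : w ᵥ* T ^ k = w := by
      induction k with
      | zero => rw [pow_zero, vecMul_one]
      | succ k ih => rw [pow_succ, ← vecMul_vecMul, ih, hw]
    exact tendsto_nhds_unique
      ((continuous_const.matrix_vecMul continuous_id).tendsto P |>.comp hP)
      (tendsto_const_nhds.congr fun k => (hTk k).symm)
  have hP_rank_one : P = vecMulVec v w := by
    rw [hP_def, mul_diagonal_single_one_mul] at hPv hwP ⊢
    exact vecMulVec_eq_of_mulVec_eq_of_vecMul_eq hPv hwP hwv
  have hlim : Tendsto (fun k => (T ^ k * M * T ^ k).trace) atTop (𝓝 (P * M * P).trace) :=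
    ((continuous_id.matrix_mul continuous_const).matrix_mul
      continuous_id).matrix_trace.tendsto P |>.comp hP
  rwa [hP_rank_one, trace_vecMulVec_mul_mul_vecMulVec, hwv, mul_one] at hlim

end Analysis

theorem tendsto_trace_pow_mul_mul_pow_of_map_ofReal [DecidableEq n] {T : Matrix n n ℝ}
    {W V : Matrix n n ℂ} {lam : n → ℂ} {i₀ : n} (hT : T.map Complex.ofReal = W * diagonal lam * V)
    (hVW : V * W = 1)
    (h1 : lam i₀ = 1) (hdom : ∀ i, i ≠ i₀ → ‖lam i‖ < 1) {v w : n → ℝ} (hv : T *ᵥ v = v)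
    (hw : w ᵥ* T = w) (hwv : w ⬝ᵥ v = 1) (M : Matrix n n ℝ) :
    Tendsto (fun k => (T ^ k * M * T ^ k).trace) atTop (𝓝 (w ⬝ᵥ M *ᵥ v)) := by
  let f := Complex.ofRealHom
  have hlim := tendsto_trace_pow_mul_mul_pow (T := T.map f) hT hVW h1 hdom (v := f ∘ v)
    (w := f ∘ w) (by ext i; rw [← RingHom.map_mulVec, hv]; rfl)
    (by ext i; rw [← RingHom.map_vecMul, hw]; rfl)
    (by rw [← RingHom.map_dotProduct, hwv, map_one]) (M.map f)
  rw [← tendsto_ofReal_iff]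
  convert hlim using 1
  · ext k
    rw [← Matrix.map_pow, ← Matrix.map_mul, ← Matrix.map_mul]
    exact AddMonoidHom.map_trace f _
  · have hMv : f ∘ (M *ᵥ v) = M.map f *ᵥ (f ∘ v) := funext (RingHom.map_mulVec f M v)
    rw [← hMv, ← RingHom.map_dotProduct]
    rfl

end Spectral

end Matrix

/-- Let `(Q, Σ)` be a normalized iTR in canonical form: `‖Σ‖_F = 1`,
`∑ᵢ Q(i)ᵀ Σ² Q(i) = I` and `∑ᵢ Q(i) Σ² Q(i)ᵀ = I`.  If the transfer matrix
`T_{Q_R} = ∑ᵢ (Q(i)Σ) ⊗ (Q(i)Σ)` is diagonalizable (over `ℂ`) with `1` a simple eigenvalue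
and all other eigenvalues of modulus `< 1`, then for every matrix `M̃`,
`trace (T_{Q_R}^k M̃ T_{Q_R}^k) → vec(Σ²)ᵀ M̃ vec(I)` as `k → ∞`. -/
theorem canonical_rayleigh_quotient_limit {d r : ℕ}
    (Q : Fin d → Matrix (Fin r) (Fin r) ℝ) (σ : Fin r → ℝ)
    (S : Matrix (Fin r) (Fin r) ℝ) (hS : S = Matrix.diagonal σ)
    (hFrob : Real.sqrt (∑ i, ∑ j, S i j ^ 2) = 1)
    (hcanL : ∑ i, (Q i)ᵀ * S ^ 2 * Q i = (1 : Matrix (Fin r) (Fin r) ℝ))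
    (hcanR : ∑ i, Q i * S ^ 2 * (Q i)ᵀ = (1 : Matrix (Fin r) (Fin r) ℝ))
    (TQR : Matrix (Fin r × Fin r) (Fin r × Fin r) ℝ)
    (hTQR : TQR = ∑ i, (Q i * S) ⊗ₖ (Q i * S))
    (W_R W_L : Matrix (Fin r × Fin r) (Fin r × Fin r) ℂ)
    (lam : Fin r × Fin r → ℂ) (i₀ : Fin r × Fin r)
    (hdiag : TQR.map (Complex.ofReal) = W_R * Matrix.diagonal lam * W_Lᴴ)
    (hWLR : W_Lᴴ * W_R = 1)
    (h1 : lam i₀ = 1)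
    (hdom : ∀ i, i ≠ i₀ → ‖lam i‖ < 1)
    (M : Matrix (Fin r × Fin r) (Fin r × Fin r) ℝ) :
    Tendsto (fun k : ℕ => (TQR ^ k * M * TQR ^ k).trace) atTop
      (nhds (dotProduct (_root_.vec (S ^ 2))
        (M.mulVec (_root_.vec (1 : Matrix (Fin r) (Fin r) ℝ))))) := by
  have hSt : Sᵀ = S := by rw [hS, diagonal_transpose]
  have hsum_sq : ∑ i, ∑ j, S i j ^ 2 = 1 := Real.sqrt_eq_one.mp hFrob
  subst hTQR
  simp only [vec_eq_matrix_vec]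
  exact tendsto_trace_pow_mul_mul_pow_of_map_ofReal hdiag hWLR h1 hdom
    (sum_kronecker_mul_self_mulVec_vec_one hSt hcanR)
    (vec_sq_vecMul_sum_kronecker_mul_self hSt hcanL)
    ((vec_sq_dotProduct_vec_one hSt).trans hsum_sq) M
end

section
/- Let X(1),…,X(d) be r×r real matrices, η > 0, and let V_L and V_R be symmetric positive definite r×r matrices satisfying the transfer-matrix fixed-point equations ∑_{i=1}^d X(i)^T V_L X(i) = η V_L and ∑_{i=1}^d X(i) V_R X(i)^T = η V_R. Let Ũ_L and Ũ_R be invertible r×r matrices with V_L = Ũ_L Ũ_L^T and V_R = Ũ_R Ũ_R^T, and let V Σ̃ W^T = Ũ_L^T Ũ_R be a singular value decomposition, where V and W are orthogonal and Σ̃ is diagonal with strictly positive diagonal entries. Define L := W^T Ũ_R^{-1}, R := Ũ_L^{-T} V, Q(i) := ‖Σ̃‖_F · L X(i) R for i = 1,…,d, and Σ := Σ̃ / ‖Σ̃‖_F. Then ‖Σ‖_F = 1 and the canonical orthogonality conditions hold: ∑_{i=1}^d Q(i)^T Σ² Q(i) = η I and ∑_{i=1}^d Q(i) Σ² Q(i)^T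 = η I. -/
/-!
Write `L = Wᵀ Ũ_R⁻¹` and `Rᵀ = Vᵀ Ũ_L⁻¹`. Orthogonality of `V` and `W` gives
`L V_R Lᵀ = 1` and `Rᵀ V_L R = 1`, while the SVD `V Σ̃ Wᵀ = Ũ_Lᵀ Ũ_R` gives
`Lᵀ Σ̃² L = V_L` and `R Σ̃² Rᵀ = V_R`. Conjugating the two fixed-point equations by
`R` and by `L` then turns them into the canonical orthogonality conditions; the
normalisation by `‖Σ̃‖_F` cancels between `Q(i)` and `Σ²`.
-/

open Matrix

namespace Matrix

section Frobenius

open scoped Matrix.Norms.Frobenius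

variable {m n : Type*} [Fintype m] [Fintype n]

theorem sqrt_sum_sq_eq_frobenius_norm (A : Matrix m n ℝ) :
    Real.sqrt (∑ i, ∑ j, A i j ^ 2) = ‖A‖ := by
  simp [frobenius_norm_def, Real.sqrt_eq_rpow]

theorem sqrt_sum_sq_ne_zero {A : Matrix m n ℝ} (hA : A ≠ 0) :
    Real.sqrt (∑ i, ∑ j, A i j ^ 2) ≠ 0 := by
  rw [sqrt_sum_sq_eq_frobenius_norm]
  exact norm_ne_zero_iff.mpr hA

theorem sqrt_sum_sq_inv_smul_self {A : Matrix m n ℝ} (hA : A ≠ 0) :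
    Real.sqrt (∑ i, ∑ j, ((Real.sqrt (∑ i, ∑ j, A i j ^ 2))⁻¹ • A) i j ^ 2) = 1 := by
  simp only [sqrt_sum_sq_eq_frobenius_norm]
  exact norm_smul_inv_norm hA

end Frobenius

variable {n : Type*} [Fintype n]

section CommRing

variable {K : Type*} [CommRing K]

theorem sum_transpose_mul_mul_conj {ι : Type*} (s : Finset ι) (X : ι → Matrix n n K)
    (A B M : Matrix n n K) :
    ∑ i ∈ s, (A * X i * B)ᵀ * M * (A * X i * B) =
      Bᵀ * (∑ i ∈ s, (X i)ᵀ * (Aᵀ * M * A) * X i) * B := by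
  rw [Finset.mul_sum, Finset.sum_mul]
  refine Finset.sum_congr rfl fun i _ => ?_
  simp only [transpose_mul, Matrix.mul_assoc]

theorem sum_mul_mul_transpose_conj {ι : Type*} (s : Finset ι) (X : ι → Matrix n n K)
    (A B M : Matrix n n K) :
    ∑ i ∈ s, (A * X i * B) * M * (A * X i * B)ᵀ =
      A * (∑ i ∈ s, X i * (B * M * Bᵀ) * (X i)ᵀ) * Aᵀ := by
  rw [Finset.mul_sum, Finset.sum_mul]
  refine Finset.sum_congr rfl fun i _ => ?_
  simp only [transpose_mul, Matrix.mul_assoc]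

variable [DecidableEq n]

theorem transpose_mul_self_orthogonal_mul {V A : Matrix n n K}
    (hV : Vᵀ * V = 1) : (V * A)ᵀ * (V * A) = Aᵀ * A := by
  rw [transpose_mul, Matrix.mul_assoc, ← Matrix.mul_assoc Vᵀ, hV, Matrix.one_mul]

theorem mul_mul_transpose_mul_inv_of_orthogonal {W U : Matrix n n K}
    (hW : Wᵀ * W = 1) (hU : IsUnit U) :
    (Wᵀ * U⁻¹) * (U * Uᵀ) * (Wᵀ * U⁻¹)ᵀ = 1 := by
  have hdU : IsUnit U.det := (isUnit_iff_isUnit_det U).mp hU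
  have hdUT : IsUnit Uᵀ.det := by rwa [det_transpose]
  rw [transpose_mul, transpose_nonsing_inv]
  simp only [Matrix.mul_assoc]
  rw [nonsing_inv_mul_cancel_left _ _ hdU, mul_nonsing_inv_cancel_left _ _ hdUT,
    transpose_transpose, hW]

theorem transpose_mul_mul_of_svd {U₁ U₂ V W D : Matrix n n K}
    (hV : Vᵀ * V = 1) (hU₂ : IsUnit U₂) (hsvd : V * D * Wᵀ = U₁ᵀ * U₂) :
    (Wᵀ * U₂⁻¹)ᵀ * (Dᵀ * D) * (Wᵀ * U₂⁻¹) = U₁ * U₁ᵀ := by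
  have hdU₂ : IsUnit U₂.det := (isUnit_iff_isUnit_det U₂).mp hU₂
  have hG : V * (D * (Wᵀ * U₂⁻¹)) = U₁ᵀ := by
    rw [← Matrix.mul_assoc, ← Matrix.mul_assoc, hsvd, Matrix.mul_assoc,
      mul_nonsing_inv _ hdU₂, Matrix.mul_one]
  calc (Wᵀ * U₂⁻¹)ᵀ * (Dᵀ * D) * (Wᵀ * U₂⁻¹)
      = (D * (Wᵀ * U₂⁻¹))ᵀ * (D * (Wᵀ * U₂⁻¹)) := by
        simp only [transpose_mul, Matrix.mul_assoc]
    _ = (V * (D * (Wᵀ * U₂⁻¹)))ᵀ * (V * (D * (Wᵀ * U₂⁻¹))) :=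
        (transpose_mul_self_orthogonal_mul hV).symm
    _ = U₁ * U₁ᵀ := by rw [hG, transpose_transpose]

end CommRing

section Field

variable [DecidableEq n] {K : Type*} [Field K]

theorem smul_transpose_mul_inv_smul_sq_mul_smul {c : K} (hc : c ≠ 0) (P D : Matrix n n K) :
    (c • P)ᵀ * (c⁻¹ • D) ^ 2 * (c • P) = Pᵀ * (D * D) * P := by
  simp only [sq, transpose_smul, Matrix.smul_mul, Matrix.mul_smul, smul_smul]
  rw [show c * (c⁻¹ * c⁻¹ * c) = 1 by field_simp, one_smul]

theorem smul_mul_inv_smul_sq_mul_transpose_smul {c : K} (hc : c ≠ 0) (P D : Matrix n n K) :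
    (c • P) * (c⁻¹ • D) ^ 2 * (c • P)ᵀ = P * (D * D) * Pᵀ := by
  simp only [sq, transpose_smul, Matrix.smul_mul, Matrix.mul_smul, smul_smul]
  rw [show c * (c⁻¹ * c⁻¹ * c) = 1 by field_simp, one_smul]

end Field

end Matrix

theorem canonical_decomposition_correct_general {d r : ℕ} (hr : 0 < r)
    (X : Fin d → Matrix (Fin r) (Fin r) ℝ) (η : ℝ)
    (V_L V_R : Matrix (Fin r) (Fin r) ℝ)
    (hfixL : ∑ i, (X i)ᵀ * V_L * X i = η • V_L)
    (hfixR : ∑ i, X i * V_R * (X i)ᵀ = η • V_R)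
    (UL UR : Matrix (Fin r) (Fin r) ℝ) (hUL : IsUnit UL) (hUR : IsUnit UR)
    (hVLU : V_L = UL * ULᵀ) (hVRU : V_R = UR * URᵀ)
    (V W : Matrix (Fin r) (Fin r) ℝ) (σt : Fin r → ℝ) (hσt : ∀ i, 0 < σt i)
    (hV : Vᵀ * V = 1) (hW : Wᵀ * W = 1)
    (hSVD : V * Matrix.diagonal σt * Wᵀ = ULᵀ * UR) :
    let St : Matrix (Fin r) (Fin r) ℝ := Matrix.diagonal σt
    let c : ℝ := Real.sqrt (∑ i, ∑ j, St i j ^ 2)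
    let L := Wᵀ * UR⁻¹
    let R := (ULᵀ)⁻¹ * V
    let Q : Fin d → Matrix (Fin r) (Fin r) ℝ := fun i => c • (L * X i * R)
    let S : Matrix (Fin r) (Fin r) ℝ := c⁻¹ • St
    Real.sqrt (∑ i, ∑ j, S i j ^ 2) = 1 ∧
      ∑ i, (Q i)ᵀ * S ^ 2 * Q i = η • (1 : Matrix (Fin r) (Fin r) ℝ) ∧
      ∑ i, Q i * S ^ 2 * (Q i)ᵀ = η • (1 : Matrix (Fin r) (Fin r) ℝ) := by
  intro St c L R Q S
  have hSt : St ≠ 0 := fun h => (hσt ⟨0, hr⟩).ne' (congrFun (diagonal_eq_zero.mp h) _)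
  have hc : c ≠ 0 := sqrt_sum_sq_ne_zero hSt
  have hStT : Stᵀ = St := diagonal_transpose σt
  have hRT : Rᵀ = Vᵀ * UL⁻¹ := by rw [transpose_mul, transpose_nonsing_inv, transpose_transpose]
  have hLSL : Lᵀ * (St * St) * L = V_L := by
    rw [hVLU, ← transpose_mul_mul_of_svd hV hUR hSVD, hStT]
  have hRSR : R * (St * St) * Rᵀ = V_R := by
    have hSVDT : W * St * Vᵀ = URᵀ * UL := by
      simpa [transpose_mul, Matrix.mul_assoc, hStT] using congrArg transpose hSVD
    rw [hVRU, ← transpose_mul_mul_of_svd hW hUL hSVDT, hStT, ← hRT, transpose_transpose]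
  have hRVR : Rᵀ * V_L * R = 1 := by
    rw [hVLU, ← mul_mul_transpose_mul_inv_of_orthogonal hV hUL, ← hRT, transpose_transpose]
  have hLVL : L * V_R * Lᵀ = 1 := hVRU ▸ mul_mul_transpose_mul_inv_of_orthogonal hW hUR
  refine ⟨sqrt_sum_sq_inv_smul_self hSt, ?_, ?_⟩
  · calc ∑ i, (Q i)ᵀ * S ^ 2 * Q i = ∑ i, (L * X i * R)ᵀ * (St * St) * (L * X i * R) :=
          Finset.sum_congr rfl fun i _ => smul_transpose_mul_inv_smul_sq_mul_smul hc _ _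
      _ = η • (Rᵀ * V_L * R) := by
          rw [sum_transpose_mul_mul_conj, hLSL, hfixL, Matrix.mul_smul, Matrix.smul_mul]
      _ = η • 1 := by rw [hRVR]
  · calc ∑ i, Q i * S ^ 2 * (Q i)ᵀ = ∑ i, (L * X i * R) * (St * St) * (L * X i * R)ᵀ :=
          Finset.sum_congr rfl fun i _ => smul_mul_inv_smul_sq_mul_transpose_smul hc _ _
      _ = η • (L * V_R * Lᵀ) := by
          rw [sum_mul_mul_transpose_conj, hRSR, hfixR, Matrix.mul_smul, Matrix.smul_mul]
      _ = η • 1 := by rw [hLVL]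

/-- **correctness of the canonical decomposition algorithm.**
Given cores `X(i)`, `η > 0`, symmetric positive definite fixed points `V_L`, `V_R` of the
transfer map, factorizations `V_L = Ũ_L Ũ_Lᵀ`, `V_R = Ũ_R Ũ_Rᵀ` with `Ũ_L`, `Ũ_R`
invertible, and an SVD `V Σ̃ Wᵀ = Ũ_Lᵀ Ũ_R` with strictly positive singular values,
the matrices `L = Wᵀ Ũ_R⁻¹`, `R = Ũ_L⁻ᵀ V`, `Q(i) = ‖Σ̃‖_F L X(i) R`, `Σ = Σ̃ / ‖Σ̃‖_F`
satisfy `‖Σ‖_F = 1` and the canonical orthogonality conditions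
`∑ᵢ Q(i)ᵀ Σ² Q(i) = η I = ∑ᵢ Q(i) Σ² Q(i)ᵀ`. -/
theorem canonical_decomposition_correct {d r : ℕ} (hr : 0 < r)
    (X : Fin d → Matrix (Fin r) (Fin r) ℝ) (η : ℝ) (hη : 0 < η)
    (V_L V_R : Matrix (Fin r) (Fin r) ℝ)
    (hVL : V_L.PosDef) (hVR : V_R.PosDef)
    (hfixL : ∑ i, (X i)ᵀ * V_L * X i = η • V_L)
    (hfixR : ∑ i, X i * V_R * (X i)ᵀ = η • V_R)
    (UL UR : Matrix (Fin r) (Fin r) ℝ) (hUL : IsUnit UL) (hUR : IsUnit UR)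
    (hVLU : V_L = UL * ULᵀ) (hVRU : V_R = UR * URᵀ)
    (V W : Matrix (Fin r) (Fin r) ℝ) (σt : Fin r → ℝ) (hσt : ∀ i, 0 < σt i)
    (hV : Vᵀ * V = 1) (hW : Wᵀ * W = 1)
    (hSVD : V * Matrix.diagonal σt * Wᵀ = ULᵀ * UR) :
    let St : Matrix (Fin r) (Fin r) ℝ := Matrix.diagonal σt
    let c : ℝ := Real.sqrt (∑ i, ∑ j, St i j ^ 2)
    let L := Wᵀ * UR⁻¹
    let R := (ULᵀ)⁻¹ * V
    let Q : Fin d → Matrix (Fin r) (Fin r) ℝ := fun i => c • (L * X i * R)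
    let S : Matrix (Fin r) (Fin r) ℝ := c⁻¹ • St
    Real.sqrt (∑ i, ∑ j, S i j ^ 2) = 1 ∧
      ∑ i, (Q i)ᵀ * S ^ 2 * Q i = η • (1 : Matrix (Fin r) (Fin r) ℝ) ∧
      ∑ i, Q i * S ^ 2 * (Q i)ᵀ = η • (1 : Matrix (Fin r) (Fin r) ℝ) :=
  canonical_decomposition_correct_general hr X η V_L V_R hfixL hfixR UL UR hUL hUR hVLU hVRU V W σt
    hσt hV hW hSVD
end
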